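/- arXiv:2604.24754 — 2 statements merged into one kernel-verified Lean document; each statement's English description precedes it below -/
import Mathlib

section
/- Let f = max A (possibly f < b−1), κ = (b−1)/f, and let s be a complex number with Re s > log N / log b. Then for every real m > 0: m^s γ_B(−κm) e^{−m} E(κm) = Σ_{l=0}^∞ γ_B(−κ m b^{−l}) e^{−m b^{−l}} (m b^{−l})^s, and this series converges absolutely. -/
/-!
Iterating the functional equation γ_B(−u) = α_B(−u) γ_B(−bu) gives
γ_B(−κm b^{−l}) = γ_B(−κm) ∏_{j<l} α_B(−κm b^{−j−1}). As B = f − A, this product expands over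
digit tuples a ∈ A^l into Σ_a e^{κm(a₁/b+⋯+a_l/b^l)} e^{−κm f(b^{−1}+⋯+b^{−l})}, and κ f = b − 1
turns the last exponent into −m(1 − b^{−l}). So the l-th term of the series is m^s γ_B(−κm) e^{−m}
times the l-th term of E(κm), and these terms are dominated by e^m (N b^{−Re s})^l, a convergent
geometric series because N < b^{Re s}.
-/

open Finset

noncomputable section

def digitVal (b l : ℕ) (a : Fin l → ℕ) : ℝ :=
  ∑ i : Fin l, (a i : ℝ) / (b : ℝ) ^ ((i : ℕ) + 1)

def tuples (A : Finset ℕ) (l : ℕ) : Finset (Fin l → ℕ) :=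
  Fintype.piFinset fun _ => A

/-- E(t) = 1 + Σ_{l≥1} Σ_{(a₁,…,a_l)∈A^l} e^{t(a₁/b+⋯+a_l/b^l)} b^{−ls}; the empty tuple (l = 0)
supplies the 1. -/
def egf (b : ℕ) (A : Finset ℕ) (s : ℂ) (t : ℝ) : ℂ :=
  ∑' l : ℕ, ∑ a ∈ tuples A l, ((Real.exp (t * digitVal b l a) : ℝ) : ℂ) * (b : ℂ) ^ (-(l : ℂ) * s)

def alphaB (B : Finset ℕ) (t : ℝ) : ℝ := ∑ d ∈ B, Real.exp (d * t)

/-- γ_B(−t) = Π_{i≥0} α_B(−b^i t), as a function of t. -/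
def gammaNeg (b : ℕ) (B : Finset ℕ) (t : ℝ) : ℝ := ∏' i : ℕ, alphaB B (-((b : ℝ) ^ i * t))

/-- γ_B(−κmb^{−l}) e^{−mb^{−l}} (mb^{−l})^s. -/
def kappaTerm (b : ℕ) (B : Finset ℕ) (κ : ℝ) (s : ℂ) (m : ℝ) (l : ℕ) : ℂ :=
  ((gammaNeg b B (κ * m * (b : ℝ) ^ (-(l : ℤ))) : ℝ) : ℂ) *
    ((Real.exp (-(m * (b : ℝ) ^ (-(l : ℤ)))) : ℝ) : ℂ) *
    ((m * (b : ℝ) ^ (-(l : ℤ)) : ℝ) : ℂ) ^ s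

section Gamma

variable {b : ℕ} {B : Finset ℕ}

lemma one_le_alphaB (h0 : 0 ∈ B) (x : ℝ) : 1 ≤ alphaB B x := by
  simpa [alphaB] using
    single_le_sum (f := fun d : ℕ => Real.exp (d * x)) (fun d _ => (Real.exp_pos _).le) h0

lemma alphaB_neg_sub_one_le (h0 : 0 ∈ B) {v : ℝ} (hv : 0 ≤ v) :
    alphaB B (-v) - 1 ≤ B.card * Real.exp (-v) := by
  rw [alphaB, ← add_sum_erase B _ h0]
  calc _ = ∑ d ∈ B.erase 0, Real.exp (d * -v) := by simp
    _ ≤ ∑ _d ∈ B.erase 0, Real.exp (-v) := by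
      refine sum_le_sum fun d hd => Real.exp_le_exp.mpr ?_
      have : (1 : ℝ) ≤ d := by exact_mod_cast Nat.one_le_iff_ne_zero.mpr (ne_of_mem_erase hd)
      nlinarith
    _ ≤ B.card * Real.exp (-v) := by
      rw [sum_const, nsmul_eq_mul]
      gcongr
      exact erase_subset 0 B

lemma multipliable_alphaB_neg_pow_mul (hb : 1 < b) (h0 : 0 ∈ B) {u : ℝ} (hu : 0 < u) :
    Multipliable fun i : ℕ => alphaB B (-((b : ℝ) ^ i * u)) := by
  have hexp : Summable fun i : ℕ => Real.exp (-u * (b : ℝ) ^ i) :=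
    Real.summable_exp_nat_mul_of_ge (neg_lt_zero.mpr hu) fun i => by
      exact_mod_cast (Nat.lt_pow_self hb).le
  have hsub : Summable fun i : ℕ => alphaB B (-((b : ℝ) ^ i * u)) - 1 :=
    (hexp.mul_left (B.card : ℝ)).of_nonneg_of_le (fun i => sub_nonneg.mpr (one_le_alphaB h0 _))
      fun i => by
        simpa [mul_comm] using alphaB_neg_sub_one_le h0 (by positivity : 0 ≤ (b : ℝ) ^ i * u)
  simpa using Real.multipliable_one_add_of_summable hsub

lemma gammaNeg_eq_alphaB_mul (hb : 1 < b) (h0 : 0 ∈ B) {u : ℝ} (hu : 0 < u) :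
    gammaNeg b B u = alphaB B (-u) * gammaNeg b B (b * u) := by
  have hb0 : (0 : ℝ) < b := by positivity
  have hshift : Multipliable fun i : ℕ => alphaB B (-((b : ℝ) ^ (i + 1) * u)) := by
    simpa only [pow_succ, mul_assoc] using multipliable_alphaB_neg_pow_mul hb h0 (mul_pos hb0 hu)
  rw [gammaNeg, tprod_eq_zero_mul' (f := fun i => alphaB B (-((b : ℝ) ^ i * u))) hshift,
    pow_zero, one_mul, gammaNeg]
  simp only [pow_succ, mul_assoc]

lemma gammaNeg_div_pow (hb : 1 < b) (h0 : 0 ∈ B) {u : ℝ} (hu : 0 < u) (l : ℕ) :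
    gammaNeg b B (u / b ^ l) =
      (∏ j ∈ range l, alphaB B (-(u / b ^ (j + 1)))) * gammaNeg b B u := by
  induction l with
  | zero => simp
  | succ l ih =>
    have hb0 : (0 : ℝ) < b := by positivity
    rw [gammaNeg_eq_alphaB_mul hb h0 (by positivity : 0 < u / (b : ℝ) ^ (l + 1)), prod_range_succ,
      show (b : ℝ) * (u / b ^ (l + 1)) = u / b ^ l by field_simp; ring, ih]
    ring

end Gamma

section Digits

variable {b l : ℕ}

lemma digitVal_mono {p q : Fin l → ℕ} (h : ∀ i, p i ≤ q i) : digitVal b l p ≤ digitVal b l q :=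
  sum_le_sum fun i _ => by gcongr; exact_mod_cast h i

lemma digitVal_sub (p q : Fin l → ℕ) :
    digitVal b l p - digitVal b l q = ∑ i : Fin l, ((p i : ℝ) - q i) / (b : ℝ) ^ ((i : ℕ) + 1) := by
  simp only [digitVal, ← sum_sub_distrib, sub_div]

lemma digitVal_const (hb : 1 < b) (d : ℕ) :
    digitVal b l (fun _ => d) = d * (1 - ((b : ℝ) ^ l)⁻¹) / (b - 1) := by
  have hb1 : (b : ℝ) - 1 ≠ 0 := sub_ne_zero.mpr (by exact_mod_cast hb.ne')
  have hb0 : (b : ℝ) ≠ 0 := by positivity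
  rw [digitVal, Fin.sum_univ_eq_sum_range (fun i => (d : ℝ) / (b : ℝ) ^ (i + 1)) l]
  induction l with
  | zero => simp
  | succ l ih =>
    rw [sum_range_succ, ih]
    field_simp
    ring

end Digits

section Expansion

variable {b : ℕ} {A : Finset ℕ} {f : ℕ}

lemma alphaB_image_sub_neg (hf : ∀ a ∈ A, a ≤ f) (v : ℝ) :
    alphaB (A.image fun a => f - a) (-v) = ∑ a ∈ A, Real.exp (((a : ℝ) - f) * v) := by
  rw [alphaB, sum_image fun a ha a' ha' h => by
    have := hf a ha; have := hf a' ha'; omega]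
  refine sum_congr rfl fun a ha => ?_
  rw [Nat.cast_sub (hf a ha)]
  ring_nf

lemma prod_alphaB_image_sub_neg (hf : ∀ a ∈ A, a ≤ f) {l : ℕ} (c : Fin l → ℝ) :
    ∏ i, alphaB (A.image fun a => f - a) (-c i) =
      ∑ p ∈ tuples A l, Real.exp (∑ i, ((p i : ℝ) - f) * c i) := by
  simp_rw [alphaB_image_sub_neg hf, prod_univ_sum, Real.exp_sum]
  rfl

end Expansion

section Kappa

variable {b : ℕ} {A : Finset ℕ} {f : ℕ} {κ m : ℝ}

lemma mul_digitVal_const_of_mul_eq (hb : 1 < b) (hκf : κ * f = b - 1) (l : ℕ) :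
    κ * digitVal b l (fun _ => f) = 1 - ((b : ℝ) ^ l)⁻¹ := by
  have hb1 : (b : ℝ) - 1 ≠ 0 := sub_ne_zero.mpr (by exact_mod_cast hb.ne')
  rw [digitVal_const hb, ← mul_div_assoc, ← mul_assoc, hκf]
  field_simp

lemma mul_digitVal_le (hb : 1 < b) (hf : ∀ a ∈ A, a ≤ f) (hκ : 0 ≤ κ) (hκf : κ * f = b - 1)
    (hm : 0 ≤ m) {l : ℕ} {p : Fin l → ℕ} (hp : p ∈ tuples A l) :
    κ * m * digitVal b l p ≤ m := by
  have hpf : ∀ i, p i ≤ f := fun i => hf _ (Fintype.mem_piFinset.mp hp i)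
  have hinv : (0 : ℝ) ≤ ((b : ℝ) ^ l)⁻¹ := by positivity
  calc κ * m * digitVal b l p ≤ κ * m * digitVal b l (fun _ => f) := by
        gcongr
        exact digitVal_mono hpf
    _ = m * (1 - ((b : ℝ) ^ l)⁻¹) := by
        rw [mul_right_comm, mul_digitVal_const_of_mul_eq hb hκf, mul_comm]
    _ ≤ m := by nlinarith

lemma gammaNeg_div_pow_mul_exp (hb : 1 < b) (hfA : f ∈ A) (hf : ∀ a ∈ A, a ≤ f) (hκ : 0 < κ)
    (hκf : κ * f = b - 1) (hm : 0 < m) (l : ℕ) :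
    gammaNeg b (A.image fun a => f - a) (κ * m / b ^ l) * Real.exp (-(m / b ^ l)) =
      gammaNeg b (A.image fun a => f - a) (κ * m) *
        (∑ p ∈ tuples A l, Real.exp (κ * m * digitVal b l p)) * Real.exp (-m) := by
  have h0 : 0 ∈ A.image fun a => f - a := mem_image.mpr ⟨f, hfA, Nat.sub_self f⟩
  rw [gammaNeg_div_pow hb h0 (mul_pos hκ hm),
    ← Fin.prod_univ_eq_prod_range (fun j => alphaB _ (-(κ * m / (b : ℝ) ^ (j + 1)))),
    prod_alphaB_image_sub_neg hf, mul_comm (∑ p ∈ _, _), mul_assoc, mul_assoc, sum_mul, sum_mul]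
  congr 1
  refine sum_congr rfl fun p _ => ?_
  rw [← Real.exp_add, ← Real.exp_add]
  congr 1
  have hsub : ∑ i : Fin l, ((p i : ℝ) - f) * (κ * m / (b : ℝ) ^ ((i : ℕ) + 1)) =
      κ * m * (digitVal b l p - digitVal b l (fun _ => f)) := by
    rw [digitVal_sub, mul_sum]
    exact sum_congr rfl fun i _ => by ring
  rw [hsub]
  linear_combination (-m) * mul_digitVal_const_of_mul_eq hb hκf l

lemma ofReal_div_pow_cpow (hm : 0 ≤ m) (b l : ℕ) (s : ℂ) :
    ((m / (b : ℝ) ^ l : ℝ) : ℂ) ^ s = (m : ℂ) ^ s * (b : ℂ) ^ (-(l : ℂ) * s) := by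
  rw [div_eq_mul_inv, Complex.ofReal_mul, Complex.mul_cpow_ofReal_nonneg hm (by positivity),
    neg_mul, ← mul_neg, Complex.natCast_cpow_natCast_mul, Complex.cpow_neg, Complex.ofReal_inv,
    Complex.inv_cpow]
  · push_cast
    rfl
  · rw [Complex.arg_ofReal_of_nonneg (by positivity)]
    exact Real.pi_pos.ne

lemma norm_natCast_cpow_neg_mul (hb : 0 < b) (l : ℕ) (s : ℂ) :
    ‖(b : ℂ) ^ (-(l : ℂ) * s)‖ = ((b : ℝ) ^ (-s.re)) ^ l := by
  rw [neg_mul, ← mul_neg, Complex.cpow_nat_mul, norm_pow, Complex.norm_natCast_cpow_of_pos hb,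
    Complex.neg_re]

end Kappa

def egfTerm (b : ℕ) (A : Finset ℕ) (s : ℂ) (t : ℝ) (l : ℕ) : ℂ :=
  ∑ a ∈ tuples A l, ((Real.exp (t * digitVal b l a) : ℝ) : ℂ) * (b : ℂ) ^ (-(l : ℂ) * s)

section EgfTerm

variable {b : ℕ} {A : Finset ℕ} {s : ℂ}

lemma egf_eq_tsum_egfTerm (t : ℝ) : egf b A s t = ∑' l, egfTerm b A s t l := rfl

lemma kappaTerm_eq_mul_egfTerm {f : ℕ} {κ m : ℝ} (hb : 1 < b) (hfA : f ∈ A)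
    (hf : ∀ a ∈ A, a ≤ f) (hκ : 0 < κ) (hκf : κ * f = b - 1) (hm : 0 < m) (l : ℕ) :
    kappaTerm b (A.image fun a => f - a) κ s m l =
      (m : ℂ) ^ s * (gammaNeg b (A.image fun a => f - a) (κ * m) : ℂ) * (Real.exp (-m) : ℂ) *
        egfTerm b A s (κ * m) l := by
  have h := congrArg Complex.ofReal (gammaNeg_div_pow_mul_exp hb hfA hf hκ hκf hm l)
  simp only [kappaTerm, zpow_neg, zpow_natCast, ← div_eq_mul_inv, ofReal_div_pow_cpow hm.le,
    egfTerm, ← sum_mul]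
  push_cast at h ⊢
  linear_combination ((m : ℂ) ^ s * (b : ℂ) ^ (-(l : ℂ) * s)) * h

lemma norm_egfTerm_le (hb : 0 < b) {t M : ℝ} {l : ℕ}
    (hM : ∀ p ∈ tuples A l, t * digitVal b l p ≤ M) :
    ‖egfTerm b A s t l‖ ≤ Real.exp M * (A.card * (b : ℝ) ^ (-s.re)) ^ l := by
  calc ‖egfTerm b A s t l‖ ≤ ∑ _p ∈ tuples A l, Real.exp M * ((b : ℝ) ^ (-s.re)) ^ l := by
        refine (norm_sum_le _ _).trans (sum_le_sum fun p hp => ?_)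
        rw [norm_mul, Complex.norm_real, Real.norm_of_nonneg (Real.exp_pos _).le,
          norm_natCast_cpow_neg_mul hb]
        gcongr
        exact hM p hp
    _ = Real.exp M * (A.card * (b : ℝ) ^ (-s.re)) ^ l := by
        rw [sum_const, tuples, Fintype.card_piFinset]
        simp only [prod_const, card_univ, Fintype.card_fin, nsmul_eq_mul, Nat.cast_pow]
        ring

lemma mul_rpow_neg_lt_one {N x σ : ℝ} (hN : 0 < N) (hx : 1 < x)
    (h : Real.log N / Real.log x < σ) : N * x ^ (-σ) < 1 := by
  have hx0 : 0 < x := by linarith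
  rw [Real.rpow_neg hx0.le, ← div_eq_mul_inv, div_lt_one (Real.rpow_pos_of_pos hx0 _),
    Real.lt_rpow_iff_log_lt hN hx0]
  exact (div_lt_iff₀ (Real.log_pos hx)).mp h

lemma summable_norm_egfTerm (hb : 1 < b) (hA : A.Nonempty)
    (hs : Real.log A.card / Real.log b < s.re) {t M : ℝ}
    (hM : ∀ l, ∀ p ∈ tuples A l, t * digitVal b l p ≤ M) :
    Summable fun l => ‖egfTerm b A s t l‖ := by
  have hratio : (A.card : ℝ) * (b : ℝ) ^ (-s.re) < 1 :=
    mul_rpow_neg_lt_one (by exact_mod_cast hA.card_pos) (by exact_mod_cast hb) hs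
  exact ((summable_geometric_of_lt_one (by positivity) hratio).mul_left _).of_nonneg_of_le
    (fun _ => norm_nonneg _) fun l => norm_egfTerm_le (by omega) (hM l)

end EgfTerm

theorem kappa_egf_expansion_general
    (b : ℕ) (hb : 2 ≤ b) (A : Finset ℕ)
    (f : ℕ) (hfA : f ∈ A) (hfmax : ∀ a ∈ A, a ≤ f) (hf0 : 0 < f)
    (s : ℂ) (hs : Real.log A.card / Real.log b < s.re) (m : ℝ) (hm : 0 < m) :
    (((m : ℝ) : ℂ) ^ s *
        ((gammaNeg b (A.image fun a => f - a) (((b : ℝ) - 1) / (f : ℝ) * m) : ℝ) : ℂ) *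
        ((Real.exp (-m) : ℝ) : ℂ) * egf b A s (((b : ℝ) - 1) / (f : ℝ) * m)
      = ∑' l : ℕ, kappaTerm b (A.image fun a => f - a) (((b : ℝ) - 1) / (f : ℝ)) s m l)
    ∧ Summable (fun l : ℕ =>
        ‖kappaTerm b (A.image fun a => f - a) (((b : ℝ) - 1) / (f : ℝ)) s m l‖) := by
  have hκ : 0 < ((b : ℝ) - 1) / f := div_pos (by norm_num; exact_mod_cast hb) (by positivity)
  have hκf : ((b : ℝ) - 1) / f * f = b - 1 := div_mul_cancel₀ _ (by positivity)
  have hterm := kappaTerm_eq_mul_egfTerm (s := s) hb hfA hfmax hκ hκf hm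
  have hsum := summable_norm_egfTerm hb ⟨f, hfA⟩ hs fun l p hp =>
    mul_digitVal_le hb hfmax hκ.le hκf hm.le hp
  refine ⟨?_, ?_⟩
  · rw [egf_eq_tsum_egfTerm, ← tsum_mul_left]
    exact tsum_congr fun l => (hterm l).symm
  · simpa only [hterm, norm_mul] using hsum.mul_left _

/-- Let f = max A (possibly f < b−1), κ = (b−1)/f, Re s > log N / log b.
For every m > 0, m^s γ_B(−κm) e^{−m} E(κm) = Σ_{l≥0} γ_B(−κmb^{−l}) e^{−mb^{−l}} (mb^{−l})^s,
the series converging absolutely. -/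
theorem kappa_egf_expansion
    (b : ℕ) (hb : 2 ≤ b) (A : Finset ℕ) (hA : A.Nonempty) (hAb : A ⊆ Finset.range b)
    (f : ℕ) (hfA : f ∈ A) (hfmax : ∀ a ∈ A, a ≤ f) (hf0 : 0 < f)
    (s : ℂ) (hs : Real.log A.card / Real.log b < s.re) (m : ℝ) (hm : 0 < m) :
    (((m : ℝ) : ℂ) ^ s *
        ((gammaNeg b (A.image fun a => f - a) (((b : ℝ) - 1) / (f : ℝ) * m) : ℝ) : ℂ) *
        ((Real.exp (-m) : ℝ) : ℂ) * egf b A s (((b : ℝ) - 1) / (f : ℝ) * m)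
      = ∑' l : ℕ, kappaTerm b (A.image fun a => f - a) (((b : ℝ) - 1) / (f : ℝ)) s m l)
    ∧ Summable (fun l : ℕ =>
        ‖kappaTerm b (A.image fun a => f - a) (((b : ℝ) - 1) / (f : ℝ)) s m l‖) :=
  kappa_egf_expansion_general b hb A f hfA hfmax hf0 s hs m hm
end
end

section
/- Let f = max A (possibly f < b−1), κ = (b−1)/f, and let s be a complex number with Re s > log N / log b. Then for every real m > 0: e^{−m} E(κm) = Σ_{l=0}^∞ ( ∏_{k=1}^{l} α_B(−κ m b^{−k}) ) e^{−m b^{−l}} b^{−ls}, and this series converges absolutely (its l-th term is bounded in absolute value by N^l b^{−l·Re s}). -/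
/-!
For each length `l`, the sum over digit tuples of `exp (t · Σ aᵢ b⁻ⁱ)` factors as
`∏ₖ Σ_{a ∈ A} exp (t a b⁻ᵏ)`, and writing `a = f - d` turns each factor into
`exp (t f b⁻ᵏ) · α_B (-t b⁻ᵏ)`. For `t = κ m` we have `κ f = b - 1`, so the pulled-out exponents
sum to `m (1 - b⁻ˡ)` and `e^{-m}` leaves `e^{-m b⁻ˡ}`. The arguments of `α_B` are nonpositive, so
each factor is at most `|B| ≤ N`; the terms are dominated by `(N b^{-Re s})ˡ`, a geometric series
with ratio `< 1` exactly when `Re s > log N / log b`.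
-/
open Finset

noncomputable section

/-- The l-th term (Π_{k=1}^l α_B(−κmb^{−k})) e^{−mb^{−l}} b^{−ls} of the series in
Statement 19. -/
def kappaEgfTerm (b : ℕ) (B : Finset ℕ) (κ : ℝ) (s : ℂ) (m : ℝ) (l : ℕ) : ℂ :=
  ((∏ k ∈ Finset.Icc 1 l, alphaB B (-(κ * m * (b : ℝ) ^ (-(k : ℤ)))) : ℝ) : ℂ) *
    ((Real.exp (-(m * (b : ℝ) ^ (-(l : ℤ)))) : ℝ) : ℂ) * (b : ℂ) ^ (-(l : ℂ) * s)

theorem sum_exp_mul_eq_exp_mul_alphaB {A : Finset ℕ} {f : ℕ} (hfmax : ∀ a ∈ A, a ≤ f) (c : ℝ) :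
    ∑ a ∈ A, Real.exp (c * a) = Real.exp (c * f) * alphaB (A.image (f - ·)) (-c) := by
  rw [alphaB, sum_image fun x hx y hy h => by have := hfmax x hx; have := hfmax y hy; omega,
    mul_sum]
  refine sum_congr rfl fun a ha => ?_
  rw [← Real.exp_add, Nat.cast_sub (hfmax a ha)]
  ring_nf

theorem sum_tuples_exp_mul_digitVal (b : ℕ) (A : Finset ℕ) (l : ℕ) (t : ℝ) :
    ∑ a ∈ tuples A l, Real.exp (t * digitVal b l a)
      = ∏ k ∈ Icc 1 l, ∑ x ∈ A, Real.exp (t * (b : ℝ) ^ (-(k : ℤ)) * x) := by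
  simp only [digitVal, mul_sum, Real.exp_sum, tuples]
  rw [← prod_univ_sum (fun _ => A)
      fun (i : Fin l) (x : ℕ) => Real.exp (t * (x / (b : ℝ) ^ ((i : ℕ) + 1))),
    Fin.prod_univ_eq_prod_range (fun i => ∑ x ∈ A, Real.exp (t * (x / (b : ℝ) ^ (i + 1)))),
    range_eq_Ico, prod_Ico_add' (fun n => ∑ x ∈ A, Real.exp (t * (x / (b : ℝ) ^ n)))]
  refine prod_congr rfl fun k _ => sum_congr rfl fun x _ => ?_
  rw [zpow_neg, zpow_natCast]
  ring_nf

theorem sum_tuples_exp_mul_digitVal_eq_prod_alphaB {A : Finset ℕ} {f : ℕ}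
    (hfmax : ∀ a ∈ A, a ≤ f) (b l : ℕ) (t : ℝ) :
    ∑ a ∈ tuples A l, Real.exp (t * digitVal b l a)
      = (∏ k ∈ Icc 1 l, alphaB (A.image (f - ·)) (-(t * (b : ℝ) ^ (-(k : ℤ)))))
        * Real.exp (t * f * ∑ k ∈ Icc 1 l, (b : ℝ) ^ (-(k : ℤ))) := by
  simp_rw [sum_tuples_exp_mul_digitVal, sum_exp_mul_eq_exp_mul_alphaB hfmax, prod_mul_distrib,
    ← Real.exp_sum, mul_sum]
  rw [mul_comm]
  congr 2
  exact sum_congr rfl fun k _ => by ring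

theorem sub_one_mul_sum_Icc_zpow_neg {x : ℝ} (hx : x ≠ 0) (l : ℕ) :
    (x - 1) * ∑ k ∈ Icc 1 l, x ^ (-(k : ℤ)) = 1 - x ^ (-(l : ℤ)) := by
  induction l with
  | zero => simp
  | succ l ih =>
    rw [sum_Icc_succ_top (by omega), mul_add, ih, Nat.cast_succ, neg_add, zpow_add₀ hx]
    field_simp
    ring

theorem exp_neg_mul_sum_tuples_eq_kappaEgfTerm {b : ℕ} (hb : 0 < b) {A : Finset ℕ} {f : ℕ}
    (hfmax : ∀ a ∈ A, a ≤ f) (hf0 : 0 < f) (s : ℂ) (m : ℝ) (l : ℕ) :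
    ((Real.exp (-m) : ℝ) : ℂ) * ∑ a ∈ tuples A l,
        ((Real.exp (((b : ℝ) - 1) / f * m * digitVal b l a) : ℝ) : ℂ) * (b : ℂ) ^ (-(l : ℂ) * s)
      = kappaEgfTerm b (A.image (f - ·)) (((b : ℝ) - 1) / f) s m l := by
  have hexp : -m + ((b : ℝ) - 1) / f * m * f * ∑ k ∈ Icc 1 l, (b : ℝ) ^ (-(k : ℤ))
      = -(m * (b : ℝ) ^ (-(l : ℤ))) := by
    have hκf : ((b : ℝ) - 1) / f * f = b - 1 := div_mul_cancel₀ _ (by positivity)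
    linear_combination (m * ∑ k ∈ Icc 1 l, (b : ℝ) ^ (-(k : ℤ))) * hκf
      + m * sub_one_mul_sum_Icc_zpow_neg (x := b) (by positivity) l
  rw [← sum_mul, ← Complex.ofReal_sum, sum_tuples_exp_mul_digitVal_eq_prod_alphaB hfmax,
    kappaEgfTerm, ← mul_assoc, ← Complex.ofReal_mul, mul_left_comm, ← Real.exp_add, hexp,
    Complex.ofReal_mul]

theorem alphaB_nonneg (B : Finset ℕ) (t : ℝ) : 0 ≤ alphaB B t :=
  sum_nonneg fun _ _ => (Real.exp_pos _).le

theorem alphaB_neg_le_card (B : Finset ℕ) {c : ℝ} (hc : 0 ≤ c) : alphaB B (-c) ≤ B.card := by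
  rw [alphaB, ← nsmul_one, ← sum_const]
  exact sum_le_sum fun d _ =>
    Real.exp_le_one_iff.mpr (mul_nonpos_of_nonneg_of_nonpos d.cast_nonneg (neg_nonpos.mpr hc))

theorem natCast_mul_rpow_neg_lt_one {N : ℕ} {x σ : ℝ} (hx : 1 < x)
    (hσ : Real.log N / Real.log x < σ) : N * x ^ (-σ) < 1 := by
  have hx0 : 0 < x := by linarith
  rw [Real.rpow_neg hx0.le, ← div_eq_mul_inv, div_lt_one (by positivity)]
  rcases N.eq_zero_or_pos with rfl | hN
  · simpa using Real.rpow_pos_of_pos hx0 σ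
  · rw [Real.lt_rpow_iff_log_lt (by positivity) hx0, ← div_lt_iff₀ (Real.log_pos hx)]
    exact hσ

theorem summable_pow_mul_rpow_neg_mul {y x σ : ℝ} (hy : 0 ≤ y) (hx : 0 < x)
    (h : y * x ^ (-σ) < 1) :
    Summable fun l : ℕ => y ^ l * x ^ (-(l : ℝ) * σ) := by
  have hpow (l : ℕ) : y ^ l * x ^ (-(l : ℝ) * σ) = (y * x ^ (-σ)) ^ l := by
    rw [mul_pow, ← Real.rpow_natCast (x ^ (-σ)), ← Real.rpow_mul hx.le]
    ring_nf
  simpa only [hpow] using summable_geometric_of_lt_one (by positivity) h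

theorem norm_kappaEgfTerm_le {b : ℕ} (hb : 0 < b) (B : Finset ℕ) {κ m : ℝ} (hκ : 0 ≤ κ)
    (hm : 0 ≤ m) (s : ℂ) (l : ℕ) :
    ‖kappaEgfTerm b B κ s m l‖ ≤ (B.card : ℝ) ^ l * (b : ℝ) ^ (-(l : ℝ) * s.re) := by
  have hprod : ∏ k ∈ Icc 1 l, alphaB B (-(κ * m * (b : ℝ) ^ (-(k : ℤ)))) ≤ (B.card : ℝ) ^ l := by
    calc _ ≤ ∏ _k ∈ Icc 1 l, (B.card : ℝ) :=
          prod_le_prod (fun _ _ => alphaB_nonneg B _)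
            fun _ _ => alphaB_neg_le_card B (by positivity)
      _ = (B.card : ℝ) ^ l := by rw [prod_const, Nat.card_Icc, add_tsub_cancel_right]
  have hexp : Real.exp (-(m * (b : ℝ) ^ (-(l : ℤ)))) ≤ 1 :=
    Real.exp_le_one_iff.mpr (neg_nonpos.mpr (by positivity))
  rw [kappaEgfTerm, norm_mul, norm_mul, Complex.norm_real, Complex.norm_real,
    Complex.norm_natCast_cpow_of_pos hb,
    Real.norm_of_nonneg (prod_nonneg fun _ _ => alphaB_nonneg B _),
    Real.norm_of_nonneg (Real.exp_pos _).le]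
  simp only [neg_mul, Complex.neg_re, Complex.mul_re, Complex.natCast_re, Complex.natCast_im,
    zero_mul, sub_zero]
  gcongr
  simpa using mul_le_mul hprod hexp (Real.exp_pos _).le (by positivity)

theorem kappa_egf_product_expansion_general
    (b : ℕ) (hb : 2 ≤ b) (A : Finset ℕ)
    (f : ℕ) (hfmax : ∀ a ∈ A, a ≤ f) (hf0 : 0 < f)
    (s : ℂ) (hs : Real.log A.card / Real.log b < s.re) (m : ℝ) (hm : 0 < m) :
    ((Real.exp (-m) : ℝ) : ℂ) * egf b A s (((b : ℝ) - 1) / (f : ℝ) * m)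
        = ∑' l : ℕ, kappaEgfTerm b (A.image fun a => f - a) (((b : ℝ) - 1) / (f : ℝ)) s m l
    ∧ (∀ l : ℕ, ‖kappaEgfTerm b (A.image fun a => f - a) (((b : ℝ) - 1) / (f : ℝ)) s m l‖
        ≤ (A.card : ℝ) ^ l * (b : ℝ) ^ (-(l : ℝ) * s.re))
    ∧ Summable (fun l : ℕ =>
        ‖kappaEgfTerm b (A.image fun a => f - a) (((b : ℝ) - 1) / (f : ℝ)) s m l‖) := by
  have hb1 : (1 : ℝ) < b := by exact_mod_cast hb
  have hκ : 0 ≤ ((b : ℝ) - 1) / f := div_nonneg (by linarith) f.cast_nonneg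
  have hbound (l : ℕ) : ‖kappaEgfTerm b (A.image fun a => f - a) (((b : ℝ) - 1) / f) s m l‖
      ≤ (A.card : ℝ) ^ l * (b : ℝ) ^ (-(l : ℝ) * s.re) :=
    (norm_kappaEgfTerm_le (by omega) _ hκ hm.le s l).trans <| by
      gcongr ?_ ^ l * _
      exact_mod_cast card_image_le
  refine ⟨?_, hbound, ?_⟩
  · rw [egf, ← tsum_mul_left]
    exact tsum_congr (exp_neg_mul_sum_tuples_eq_kappaEgfTerm (by omega) hfmax hf0 s m)
  · exact .of_nonneg_of_le (fun _ => norm_nonneg _) hbound <|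
      summable_pow_mul_rpow_neg_mul (by positivity) (by positivity)
        (natCast_mul_rpow_neg_lt_one hb1 hs)

/-- Let f = max A (possibly f < b−1), κ = (b−1)/f, Re s > log N / log b.
For every m > 0, e^{−m}E(κm) = Σ_{l≥0} (Π_{k=1}^l α_B(−κmb^{−k})) e^{−mb^{−l}} b^{−ls},
the series converging absolutely, with l-th term bounded by N^l b^{−l·Re s}. -/
theorem kappa_egf_product_expansion
    (b : ℕ) (hb : 2 ≤ b) (A : Finset ℕ) (hA : A.Nonempty) (hAb : A ⊆ Finset.range b)
    (f : ℕ) (hfA : f ∈ A) (hfmax : ∀ a ∈ A, a ≤ f) (hf0 : 0 < f)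
    (s : ℂ) (hs : Real.log A.card / Real.log b < s.re) (m : ℝ) (hm : 0 < m) :
    ((Real.exp (-m) : ℝ) : ℂ) * egf b A s (((b : ℝ) - 1) / (f : ℝ) * m)
        = ∑' l : ℕ, kappaEgfTerm b (A.image fun a => f - a) (((b : ℝ) - 1) / (f : ℝ)) s m l
    ∧ (∀ l : ℕ, ‖kappaEgfTerm b (A.image fun a => f - a) (((b : ℝ) - 1) / (f : ℝ)) s m l‖
        ≤ (A.card : ℝ) ^ l * (b : ℝ) ^ (-(l : ℝ) * s.re))
    ∧ Summable (fun l : ℕ =>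
        ‖kappaEgfTerm b (A.image fun a => f - a) (((b : ℝ) - 1) / (f : ℝ)) s m l‖) :=
  kappa_egf_product_expansion_general b hb A f hfmax hf0 s hs m hm
end
end
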